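/- Let V_1 (n × p) and V_2 (n × q) have orthonormal columns, let M = [V_1, V_2]^T (stacked (p+q) × n) with SVD M = U_M Σ_M V_M^T, and suppose the i-th singular value σ_{M,i} is simple and greater than 1. Then the i-th left singular vector of M can be written as U_{M,i} = [u_{1,i}^T, u_{2,i}^T]^T / √2 where u_{1,i}, u_{2,i} are the i-th left and right singular vectors of V_1^T V_2, and the i-th right singular vector satisfies V_{M,i} = (V_1 u_{1,i} + V_2 u_{2,i}) / (√2 σ_{M,i}); i.e., the AJIVE joint direction is the scaled sum of the i-th pair of principal vectors p_i = V_1 u_{1,i} and q_i = V_2 u_{2,i}. -/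

import Mathlib

/-!
Write `uM = (x; y)`. The relations `V₁ᵀ vM = σ x`, `V₂ᵀ vM = σ y` and `V₁ x + V₂ y = σ vM`
give `B y = (σ² - 1) x` and `Bᵀ x = (σ² - 1) y` for `B = V₁ᵀ V₂`, so `(x, y)` is a singular
pair of `B`, and since `σ² ≠ 1` the two halves have the same norm `1/√2`.

The squared singular values of `M` are the eigenvalues of `Mᵀ M = V₁ V₁ᵀ + V₂ V₂ᵀ`, and for
`c > 0` the map `v ↦ V₂ᵀ v` is an isomorphism from the `(1 + c)`-eigenspace of
`V₁ V₁ᵀ + V₂ V₂ᵀ` onto the `c²`-eigenspace of `Bᵀ B`. Hence the values `σ_{M,j}²` and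
`1 + σ_{B,k}` above `1` occur with equal multiplicities, and as both lists are sorted
decreasingly, `σ²` at position `i` of the first forces `1 + σ_{B,i} = σ²`.
-/

open Matrix

/-- View a plain vector as an element of Euclidean space. -/
noncomputable def toEuc {n : ℕ} (v : Fin n → ℝ) : EuclideanSpace ℝ (Fin n) := WithLp.toLp 2 v

/-- The row space of a matrix, as a subspace of Euclidean space `ℝ^n`. -/
noncomputable def rowSpace {m : Type*} {n : ℕ} (A : Matrix m (Fin n) ℝ) :
    Submodule ℝ (EuclideanSpace ℝ (Fin n)) :=
  Submodule.span ℝ (Set.range fun i => toEuc (A i))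

/-- The orthogonal projection matrix onto a subspace of `ℝ^n`. -/
noncomputable def projMat {n : ℕ} (U : Submodule ℝ (EuclideanSpace ℝ (Fin n))) :
    Matrix (Fin n) (Fin n) ℝ :=
  Matrix.toEuclideanLin.symm (U.subtype ∘ₗ U.orthogonalProjectionOnto.toLinearMap)

/-- The operator (spectral) norm of a matrix. -/
noncomputable def opNorm {m : Type*} [Fintype m] {n : ℕ} (A : Matrix m (Fin n) ℝ) : ℝ :=
  ‖(Matrix.toEuclideanLin A).toContinuousLinearMap‖

/-- Singular values of a matrix, in ascending order. -/
noncomputable def svalAsc {m : Type*} [Fintype m] {n : ℕ} (A : Matrix m (Fin n) ℝ) :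
    Fin n → ℝ := fun i =>
  Real.sqrt ((show (Aᵀ * A).IsHermitian by
      simpa using Matrix.isHermitian_conjTranspose_mul_self A).eigenvalues
    (Tuple.sort (show (Aᵀ * A).IsHermitian by
      simpa using Matrix.isHermitian_conjTranspose_mul_self A).eigenvalues i))

/-- Singular values of a matrix, in descending order (`svalDesc A 0` is the largest). -/
noncomputable def svalDesc {m : Type*} [Fintype m] {n : ℕ} (A : Matrix m (Fin n) ℝ)
    (i : Fin n) : ℝ :=
  svalAsc A i.rev

open Finset

open Unitary in
theorem Matrix.IsHermitian.card_eigenvalues_eq_finrank_eigenspace {𝕜 n : Type*} [RCLike 𝕜]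
    [Fintype n] [DecidableEq n] {A : Matrix n n 𝕜} (hA : A.IsHermitian) (μ : ℝ) :
    #{j | hA.eigenvalues j = μ} = Module.finrank 𝕜 (Module.End.eigenspace (toLin' A) μ) := by
  have hshift : A - (μ : 𝕜) • 1 = conjStarAlgAut 𝕜 _ hA.eigenvectorUnitary
      (diagonal fun j => (hA.eigenvalues j - μ : 𝕜)) := by
    conv_lhs => rw [hA.spectral_theorem]
    rw [← map_one (conjStarAlgAut 𝕜 _ hA.eigenvectorUnitary), ← map_smul, ← map_sub,
      smul_one_eq_diagonal, diagonal_sub]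
    rfl
  have hrank : (A - (μ : 𝕜) • 1).rank = #{j | hA.eigenvalues j ≠ μ} := by
    classical
    rw [hshift, conjStarAlgAut_apply, ← coe_star]
    simp [-isUnit_iff_ne_zero, -coe_star, rank_diagonal, sub_eq_zero, Fintype.card_subtype]
  have hsplit := card_filter_add_card_filter_not (s := univ) (fun j => hA.eigenvalues j = μ)
  have hnullity := (A - (μ : 𝕜) • 1).mulVecLin.finrank_range_add_finrank_ker
  rw [← Matrix.rank, hrank, Module.finrank_fintype_fun_eq_card] at hnullity
  have hker : toLin' A - (μ : 𝕜) • 1 = (A - (μ : 𝕜) • 1).mulVecLin := by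
    ext; simp
  rw [Module.End.eigenspace_def, hker]
  simp only [card_univ, ne_eq] at hsplit hnullity
  omega

theorem Matrix.isHermitian_transpose_mul_self {m n : Type*} [Fintype m] (A : Matrix m n ℝ) :
    (Aᵀ * A).IsHermitian := by
  simpa using isHermitian_conjTranspose_mul_self A

theorem Matrix.posSemidef_transpose_mul_self {m n : Type*} [Fintype m] [Fintype n]
    (A : Matrix m n ℝ) :
    (Aᵀ * A).PosSemidef := by
  simpa using posSemidef_conjTranspose_mul_self A

theorem Antitone.apply_eq_iff_card {α : Type*} [LinearOrder α] {n : ℕ} {g : Fin n → α}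
    (hg : Antitone g) (i : Fin n) (c : α) :
    g i = c ↔ #{k | c < g k} ≤ i ∧ (i : ℕ) < #{k | c ≤ g k} := by
  constructor
  · rintro rfl
    constructor
    · calc #{k | g i < g k} ≤ #(Iio i) :=
            card_le_card fun k hk => by
              simp only [mem_filter, mem_univ, true_and, mem_Iio] at hk ⊢
              exact lt_of_not_ge fun hik => (hg hik).not_gt hk
        _ = i := Fin.card_Iio i
    · calc (i : ℕ) < #(Iic i) := by simp
        _ ≤ #{k | g i ≤ g k} :=
            card_le_card fun k hk => by simpa using hg (mem_Iic.mp hk)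
  · rintro ⟨hgt, hge⟩
    rcases lt_trichotomy (g i) c with hlt | heq | hlt
    · have : #{k | c ≤ g k} ≤ #(Iio i) :=
        card_le_card fun k hk => by
          simp only [mem_filter, mem_univ, true_and, mem_Iio] at hk ⊢
          exact lt_of_not_ge fun hik => (hg hik).not_gt (hlt.trans_le hk)
      simp only [Fin.card_Iio] at this
      omega
    · exact heq
    · have : #(Iic i) ≤ #{k | c < g k} :=
        card_le_card fun k hk => by simpa using hlt.trans_le (hg (mem_Iic.mp hk))
      simp only [Fin.card_Iic] at this
      omega

theorem Finset.card_filter_comp_eq_sum_card_fiber {β α : Type*} [Fintype β] [DecidableEq α]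
    (f : β → α) (P : α → Prop) [DecidablePred P] {t : Finset α} (ht : ∀ b, f b ∈ t) :
    #{b | P (f b)} = ∑ a ∈ t with P a, #{b | f b = a} := by
  rw [card_eq_sum_card_fiberwise (f := f) (t := {a ∈ t | P a}) fun b _ => by simp_all]
  refine sum_congr rfl fun a ha => congrArg card ?_
  rw [filter_filter]
  refine filter_congr fun b _ => ⟨fun h => h.2, fun h => ⟨h ▸ (mem_filter.mp ha).2, h⟩⟩

theorem Finset.card_filter_comp_eq_of_card_fiber_eq {ι κ α : Type*} [Fintype ι] [Fintype κ]
    [DecidableEq α] (e : ι → α) (e' : κ → α) (P : α → Prop) [DecidablePred P]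
    (h : ∀ a, P a → #{i | e i = a} = #{k | e' k = a}) :
    #{i | P (e i)} = #{k | P (e' k)} := by
  rw [card_filter_comp_eq_sum_card_fiber e P (t := univ.image e ∪ univ.image e') (by simp),
    card_filter_comp_eq_sum_card_fiber e' P (t := univ.image e ∪ univ.image e') (by simp)]
  exact sum_congr rfl fun a ha => h a (mem_filter.mp ha).2

theorem svalDesc_nonneg {m : Type*} [Fintype m] {n : ℕ} (A : Matrix m (Fin n) ℝ) (j : Fin n) :
    0 ≤ svalDesc A j :=
  Real.sqrt_nonneg _

theorem svalDesc_antitone {m : Type*} [Fintype m] {n : ℕ} (A : Matrix m (Fin n) ℝ) :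
    Antitone (svalDesc A) := fun _ _ hab =>
  Real.sqrt_le_sqrt
    (Tuple.monotone_sort (isHermitian_transpose_mul_self A).eigenvalues (Fin.rev_le_rev.mpr hab))

theorem svalDesc_sq {m : Type*} [Fintype m] {n : ℕ} (A : Matrix m (Fin n) ℝ) (j : Fin n) :
    svalDesc A j ^ 2 = (isHermitian_transpose_mul_self A).eigenvalues
      (Tuple.sort (isHermitian_transpose_mul_self A).eigenvalues j.rev) :=
  Real.sq_sqrt ((posSemidef_transpose_mul_self A).eigenvalues_nonneg _)

theorem card_svalDesc_sq_eq_finrank_eigenspace {m : Type*} [Fintype m] {n : ℕ}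
    (A : Matrix m (Fin n) ℝ) (μ : ℝ) :
    #{j | svalDesc A j ^ 2 = μ} =
      Module.finrank ℝ (Module.End.eigenspace (toLin' (Aᵀ * A)) μ) := by
  have hA := isHermitian_transpose_mul_self A
  have := hA.card_eigenvalues_eq_finrank_eigenspace μ
  rw [RCLike.ofReal_real_eq_id, id] at this
  rw [← this]
  exact card_equiv (Fin.revPerm.trans (Tuple.sort hA.eigenvalues)) fun j => by simp [svalDesc_sq]

section Stacked

variable {R m ι κ : Type*} [Fintype m] [Fintype ι] [Fintype κ]
  {V1 : Matrix m ι R} {V2 : Matrix m κ R}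

section CommRing

variable [CommRing R]

theorem transpose_mulVec_add_mulVec_left [DecidableEq ι] (h1 : V1ᵀ * V1 = 1) (x : ι → R)
    (y : κ → R) :
    V1ᵀ *ᵥ (V1 *ᵥ x + V2 *ᵥ y) = x + (V1ᵀ * V2) *ᵥ y := by
  rw [mulVec_add, mulVec_mulVec, mulVec_mulVec, h1, one_mulVec]

theorem transpose_mulVec_add_mulVec_right [DecidableEq κ] (h2 : V2ᵀ * V2 = 1) (x : ι → R)
    (y : κ → R) :
    V2ᵀ *ᵥ (V1 *ᵥ x + V2 *ᵥ y) = (V1ᵀ * V2)ᵀ *ᵥ x + y := by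
  rw [mulVec_add, mulVec_mulVec, mulVec_mulVec, h2, one_mulVec, transpose_mul,
    transpose_transpose]

theorem mulVec_eq_smul_of_stacked [DecidableEq ι] [DecidableEq κ] (h1 : V1ᵀ * V1 = 1)
    (h2 : V2ᵀ * V2 = 1) {w : m → R} {x : ι → R} {y : κ → R} {s t r : R}
    (hx : V1ᵀ *ᵥ w = s • x) (hy : V2ᵀ *ᵥ w = s • y)
    (hw : V1 *ᵥ x + V2 *ᵥ y = t • w) (hst : s * t = 1 + r) :
    (V1ᵀ * V2) *ᵥ y = r • x ∧ (V1ᵀ * V2)ᵀ *ᵥ x = r • y := by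
  have hx' := transpose_mulVec_add_mulVec_left (V2 := V2) h1 x y
  have hy' := transpose_mulVec_add_mulVec_right (V1 := V1) h2 x y
  rw [hw, mulVec_smul, hx, smul_smul, mul_comm, hst, add_smul, one_smul] at hx'
  rw [hw, mulVec_smul, hy, smul_smul, mul_comm, hst, add_smul, one_smul, add_comm y] at hy'
  exact ⟨(add_left_cancel hx').symm, (add_right_cancel hy').symm⟩

theorem mulVec_eq_smul_of_mem_eigenspace [DecidableEq m] [DecidableEq ι] [DecidableEq κ]
    (h1 : V1ᵀ * V1 = 1) (h2 : V2ᵀ * V2 = 1) {c : R} {v : m → R}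
    (hv : v ∈ Module.End.eigenspace (toLin' (V1 * V1ᵀ + V2 * V2ᵀ)) (1 + c)) :
    (V1ᵀ * V2) *ᵥ (V2ᵀ *ᵥ v) = c • V1ᵀ *ᵥ v ∧ (V1ᵀ * V2)ᵀ *ᵥ (V1ᵀ *ᵥ v) = c • V2ᵀ *ᵥ v := by
  rw [Module.End.mem_eigenspace_iff, toLin'_apply] at hv
  exact mulVec_eq_smul_of_stacked h1 h2 (one_smul R _).symm (one_smul R _).symm
    (by rw [mulVec_mulVec, mulVec_mulVec, ← add_mulVec, hv]) (one_mul _)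

theorem transpose_mulVec_mem_eigenspace [DecidableEq m] [DecidableEq ι] [DecidableEq κ]
    (h1 : V1ᵀ * V1 = 1) (h2 : V2ᵀ * V2 = 1) {c : R} {v : m → R}
    (hv : v ∈ Module.End.eigenspace (toLin' (V1 * V1ᵀ + V2 * V2ᵀ)) (1 + c)) :
    V2ᵀ *ᵥ v ∈ Module.End.eigenspace (toLin' ((V1ᵀ * V2)ᵀ * (V1ᵀ * V2))) (c ^ 2) := by
  obtain ⟨hBy, hBx⟩ := mulVec_eq_smul_of_mem_eigenspace h1 h2 hv
  rw [Module.End.mem_eigenspace_iff, toLin'_apply, ← mulVec_mulVec, hBy, mulVec_smul, hBx,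
    smul_smul, sq]

end CommRing

section Field

variable [Field R]

/-- Up to the factor `1 + c`, the inverse of `v ↦ V₂ᵀ v` on the eigenspaces below: it sends `u`
to the sum `V₁ u₁ + V₂ u` of principal vectors, `u₁ = c⁻¹ V₁ᵀ V₂ u`. -/
noncomputable def principalSumMatrix (V1 : Matrix m ι R) (V2 : Matrix m κ R) (c : R) :
    Matrix m κ R :=
  V1 * (c⁻¹ • (V1ᵀ * V2)) + V2

theorem principalSumMatrix_mulVec (c : R) (u : κ → R) :
    principalSumMatrix V1 V2 c *ᵥ u = V1 *ᵥ (c⁻¹ • (V1ᵀ * V2) *ᵥ u) + V2 *ᵥ u := by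
  rw [principalSumMatrix, add_mulVec, ← mulVec_mulVec, smul_mulVec]

theorem transpose_mulVec_principalSumMatrix_mulVec [DecidableEq ι] [DecidableEq κ]
    (h1 : V1ᵀ * V1 = 1) (h2 : V2ᵀ * V2 = 1) {c : R} (hc : c ≠ 0) {u : κ → R}
    (hu : (V1ᵀ * V2)ᵀ *ᵥ (V1ᵀ * V2) *ᵥ u = c ^ 2 • u) :
    V1ᵀ *ᵥ (principalSumMatrix V1 V2 c *ᵥ u) = (1 + c) • c⁻¹ • (V1ᵀ * V2) *ᵥ u ∧
      V2ᵀ *ᵥ (principalSumMatrix V1 V2 c *ᵥ u) = (1 + c) • u := by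
  rw [principalSumMatrix_mulVec, transpose_mulVec_add_mulVec_left h1,
    transpose_mulVec_add_mulVec_right h2, mulVec_smul, hu, smul_smul c⁻¹, sq,
    inv_mul_cancel_left₀ hc]
  refine ⟨?_, by module⟩
  rw [smul_smul, add_mul, one_mul, mul_inv_cancel₀ hc, add_smul, one_smul]

variable [DecidableEq m] [DecidableEq ι] [DecidableEq κ]

theorem principalSumMatrix_mulVec_mem_eigenspace (h1 : V1ᵀ * V1 = 1) (h2 : V2ᵀ * V2 = 1)
    {c : R} (hc : c ≠ 0) {u : κ → R}
    (hu : u ∈ Module.End.eigenspace (toLin' ((V1ᵀ * V2)ᵀ * (V1ᵀ * V2))) (c ^ 2)) :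
    principalSumMatrix V1 V2 c *ᵥ u ∈
      Module.End.eigenspace (toLin' (V1 * V1ᵀ + V2 * V2ᵀ)) (1 + c) := by
  rw [Module.End.mem_eigenspace_iff, toLin'_apply, ← mulVec_mulVec] at hu
  obtain ⟨hx, hy⟩ := transpose_mulVec_principalSumMatrix_mulVec h1 h2 hc hu
  rw [Module.End.mem_eigenspace_iff, toLin'_apply, add_mulVec, ← mulVec_mulVec, ← mulVec_mulVec,
    hx, hy, principalSumMatrix_mulVec, mulVec_smul, mulVec_smul, mulVec_smul, smul_add]

theorem principalSumMatrix_mulVec_transpose_mulVec (h1 : V1ᵀ * V1 = 1) (h2 : V2ᵀ * V2 = 1)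
    {c : R} (hc : c ≠ 0) {v : m → R}
    (hv : v ∈ Module.End.eigenspace (toLin' (V1 * V1ᵀ + V2 * V2ᵀ)) (1 + c)) :
    principalSumMatrix V1 V2 c *ᵥ (V2ᵀ *ᵥ v) = (1 + c) • v := by
  rw [principalSumMatrix_mulVec, (mulVec_eq_smul_of_mem_eigenspace h1 h2 hv).1, smul_smul,
    inv_mul_cancel₀ hc, one_smul, mulVec_mulVec, mulVec_mulVec, ← add_mulVec, ← toLin'_apply,
    Module.End.mem_eigenspace_iff.mp hv]

noncomputable def stackedEigenspaceEquiv (h1 : V1ᵀ * V1 = 1) (h2 : V2ᵀ * V2 = 1) {c : R}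
    (hc : c ≠ 0) (hc1 : 1 + c ≠ 0) :
    Module.End.eigenspace (toLin' (V1 * V1ᵀ + V2 * V2ᵀ)) (1 + c) ≃ₗ[R]
      Module.End.eigenspace (toLin' ((V1ᵀ * V2)ᵀ * (V1ᵀ * V2))) (c ^ 2) :=
  LinearEquiv.ofLinearMap
    (V2ᵀ.mulVecLin.restrict fun _ hv => transpose_mulVec_mem_eigenspace h1 h2 hv)
    (((1 + c)⁻¹ • principalSumMatrix V1 V2 c).mulVecLin.restrict fun _ hu => by
      simpa only [mulVecLin_apply, smul_mulVec] using
        Submodule.smul_mem _ _ (principalSumMatrix_mulVec_mem_eigenspace h1 h2 hc hu))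
    (LinearMap.ext fun ⟨u, hu⟩ => Subtype.ext <| by
      rw [Module.End.mem_eigenspace_iff, toLin'_apply, ← mulVec_mulVec] at hu
      change V2ᵀ *ᵥ (((1 + c)⁻¹ • principalSumMatrix V1 V2 c) *ᵥ u) = u
      rw [smul_mulVec, mulVec_smul, (transpose_mulVec_principalSumMatrix_mulVec h1 h2 hc hu).2,
        smul_smul, inv_mul_cancel₀ hc1, one_smul])
    (LinearMap.ext fun ⟨v, hv⟩ => Subtype.ext <| by
      change ((1 + c)⁻¹ • principalSumMatrix V1 V2 c) *ᵥ (V2ᵀ *ᵥ v) = v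
      rw [smul_mulVec, principalSumMatrix_mulVec_transpose_mulVec h1 h2 hc hv, smul_smul,
        inv_mul_cancel₀ hc1, one_smul])

theorem finrank_eigenspace_stacked (h1 : V1ᵀ * V1 = 1) (h2 : V2ᵀ * V2 = 1) {c : R}
    (hc : c ≠ 0) (hc1 : 1 + c ≠ 0) :
    Module.finrank R (Module.End.eigenspace (toLin' (V1 * V1ᵀ + V2 * V2ᵀ)) (1 + c)) =
      Module.finrank R (Module.End.eigenspace (toLin' ((V1ᵀ * V2)ᵀ * (V1ᵀ * V2))) (c ^ 2)) :=
  (stackedEigenspaceEquiv h1 h2 hc hc1).finrank_eq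

end Field

end Stacked

theorem sq_svalDesc_fromRows_sub_one {n p q : ℕ} {V1 : Matrix (Fin n) (Fin p) ℝ}
    {V2 : Matrix (Fin n) (Fin q) ℝ} (h1 : V1ᵀ * V1 = 1) (h2 : V2ᵀ * V2 = 1) {j : Fin n}
    {k : Fin q} (hjk : (j : ℕ) = k) (hσ : 1 < svalDesc (fromRows V1ᵀ V2ᵀ) j) :
    svalDesc (fromRows V1ᵀ V2ᵀ) j ^ 2 - 1 = svalDesc (V1ᵀ * V2) k := by
  set sM := svalDesc (fromRows V1ᵀ V2ᵀ)
  set sB := svalDesc (V1ᵀ * V2)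
  have hMM : (fromRows V1ᵀ V2ᵀ)ᵀ * fromRows V1ᵀ V2ᵀ = V1 * V1ᵀ + V2 * V2ᵀ := by
    rw [transpose_fromRows, fromCols_mul_fromRows, transpose_transpose, transpose_transpose]
  have hfiber (μ : ℝ) (hμ : sM j ^ 2 ≤ μ) : #{i | sM i ^ 2 = μ} = #{i | 1 + sB i = μ} := by
    have hμ1 : 0 < μ - 1 := by nlinarith
    calc #{i | sM i ^ 2 = μ}
        = Module.finrank ℝ
            (Module.End.eigenspace (toLin' (V1 * V1ᵀ + V2 * V2ᵀ)) (1 + (μ - 1))) := by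
          rw [card_svalDesc_sq_eq_finrank_eigenspace, hMM, add_sub_cancel]
      _ = #{i | sB i ^ 2 = (μ - 1) ^ 2} := by
          rw [finrank_eigenspace_stacked h1 h2 hμ1.ne' (by linarith),
            card_svalDesc_sq_eq_finrank_eigenspace]
      _ = #{i | 1 + sB i = μ} := by
          congr! 2 with i
          rw [sq_eq_sq₀ (svalDesc_nonneg _ i) hμ1.le]
          constructor <;> intro h <;> linarith
  have hM : Antitone fun i => sM i ^ 2 := fun a b hab =>
    pow_le_pow_left₀ (svalDesc_nonneg _ b) (svalDesc_antitone _ hab) 2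
  have hB : Antitone fun i => 1 + sB i := fun a b hab => by
    simpa using svalDesc_antitone (V1ᵀ * V2) hab
  have hcount := (hM.apply_eq_iff_card j (sM j ^ 2)).mp rfl
  rw [card_filter_comp_eq_of_card_fiber_eq _ (fun i => 1 + sB i) (sM j ^ 2 < ·)
      fun μ hμ => hfiber μ hμ.le,
    card_filter_comp_eq_of_card_fiber_eq _ (fun i => 1 + sB i) (sM j ^ 2 ≤ ·) hfiber, hjk]
    at hcount
  linarith [(hB.apply_eq_iff_card k (sM j ^ 2)).mpr hcount]

theorem dotProduct_self_eq_of_mulVec_eq_smul {R ι κ : Type*} [CommRing R] [IsDomain R]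
    [Fintype ι] [Fintype κ] {B : Matrix ι κ R} {x : ι → R} {y : κ → R} {r : R} (hr : r ≠ 0)
    (hy : B *ᵥ y = r • x) (hx : Bᵀ *ᵥ x = r • y) : x ⬝ᵥ x = y ⬝ᵥ y := by
  refine mul_left_cancel₀ hr ?_
  calc r * x ⬝ᵥ x = x ⬝ᵥ B *ᵥ y := by rw [hy, dotProduct_smul, smul_eq_mul]
    _ = Bᵀ *ᵥ x ⬝ᵥ y := by rw [dotProduct_mulVec, mulVec_transpose]
    _ = r * y ⬝ᵥ y := by rw [hx, smul_dotProduct, smul_eq_mul]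

theorem stacked_singular_vectors_decompose_general (n p q : ℕ) (hpn : p ≤ n)
    (V1 : Matrix (Fin n) (Fin p) ℝ) (V2 : Matrix (Fin n) (Fin q) ℝ)
    (h1 : V1ᵀ * V1 = 1) (h2 : V2ᵀ * V2 = 1)
    (M : Matrix (Fin p ⊕ Fin q) (Fin n) ℝ) (hM : M = Matrix.fromRows V1ᵀ V2ᵀ)
    (i : Fin (min p q)) (σ : ℝ)
    (hσ : σ = svalDesc M (Fin.castLE (le_trans (min_le_left p q) hpn) i)) (hσ1 : 1 < σ)
    (uM : (Fin p ⊕ Fin q) → ℝ) (vM : Fin n → ℝ)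
    (huM : ∑ x, uM x ^ 2 = 1)
    (htriple1 : M.mulVec vM = σ • uM) (htriple2 : Mᵀ.mulVec uM = σ • vM) :
    ∃ (u1 : Fin p → ℝ) (u2 : Fin q → ℝ),
      (∑ a, u1 a ^ 2 = 1) ∧ (∑ b, u2 b ^ 2 = 1) ∧
      (V1ᵀ * V2).mulVec u2 = (σ ^ 2 - 1) • u1 ∧
      (V1ᵀ * V2)ᵀ.mulVec u1 = (σ ^ 2 - 1) • u2 ∧
      σ ^ 2 - 1 = svalDesc (V1ᵀ * V2) (Fin.castLE (min_le_right p q) i) ∧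
      uM = Sum.elim (fun a => u1 a / Real.sqrt 2) (fun b => u2 b / Real.sqrt 2) ∧
      vM = (1 / (Real.sqrt 2 * σ)) • (V1.mulVec u1 + V2.mulVec u2) := by
  subst hM
  obtain ⟨a, b, rfl⟩ : ∃ a b, uM = Sum.elim a b := ⟨_, _, (Sum.elim_comp_inl_inr uM).symm⟩
  have hsmul : σ • Sum.elim a b = Sum.elim (σ • a) (σ • b) := by ext (x | x) <;> rfl
  rw [fromRows_mulVec, hsmul, Sum.elim_eq_iff] at htriple1
  rw [transpose_fromRows, transpose_transpose, transpose_transpose, fromCols_mulVec_sumElim]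
    at htriple2
  have hc : σ ^ 2 - 1 ≠ 0 := by nlinarith
  obtain ⟨hBb, hBa⟩ := mulVec_eq_smul_of_stacked h1 h2 htriple1.1 htriple1.2 htriple2
    (show σ * σ = 1 + (σ ^ 2 - 1) by ring)
  have hab : ∑ x, a x ^ 2 = ∑ x, b x ^ 2 := by
    simpa only [dotProduct, sq] using dotProduct_self_eq_of_mulVec_eq_smul hc hBb hBa
  simp only [Fintype.sum_sum_type, Sum.elim_inl, Sum.elim_inr] at huM
  have hnorm {k : ℕ} (w : Fin k → ℝ) : ∑ x, (√2 • w) x ^ 2 = 2 * ∑ x, w x ^ 2 := by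
    simp only [Pi.smul_apply, smul_eq_mul, mul_pow, Real.sq_sqrt zero_le_two, mul_sum]
  have hs : √2 ≠ 0 := by positivity
  refine ⟨√2 • a, √2 • b, ?_, ?_, ?_, ?_, ?_, ?_, ?_⟩
  · rw [hnorm]; linarith
  · rw [hnorm]; linarith
  · rw [mulVec_smul, hBb, smul_comm]
  · rw [mulVec_smul, hBa, smul_comm]
  · rw [hσ]
    exact sq_svalDesc_fromRows_sub_one h1 h2 rfl (hσ ▸ hσ1)
  · ext (x | x) <;> simp [hs]
  · rw [mulVec_smul, mulVec_smul, ← smul_add, htriple2, smul_smul, smul_smul]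
    field_simp
    simp

/-- for the stacked matrix `M = [V₁ᵀ; V₂ᵀ]` of two orthonormal basis
matrices, if `(uM, vM, σ)` is an `i`-th singular triple of `M` with `σ` simple and
`σ > 1`, then `uM = [u₁; u₂]/√2` where `(u₁, u₂)` is an `i`-th pair of left/right
singular vectors of `V₁ᵀ V₂` (with singular value `σ² − 1`), and
`vM = (V₁ u₁ + V₂ u₂) / (√2 σ)` — the scaled sum of the `i`-th pair of principal
vectors `p_i = V₁ u₁` and `q_i = V₂ u₂`. -/
theorem stacked_singular_vectors_decompose (n p q : ℕ) (hpn : p ≤ n) (hqn : q ≤ n)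
    (V1 : Matrix (Fin n) (Fin p) ℝ) (V2 : Matrix (Fin n) (Fin q) ℝ)
    (h1 : V1ᵀ * V1 = 1) (h2 : V2ᵀ * V2 = 1)
    (M : Matrix (Fin p ⊕ Fin q) (Fin n) ℝ) (hM : M = Matrix.fromRows V1ᵀ V2ᵀ)
    (i : Fin (min p q)) (σ : ℝ)
    (hσ : σ = svalDesc M (Fin.castLE (le_trans (min_le_left p q) hpn) i)) (hσ1 : 1 < σ)
    (hsimple : ∀ j : Fin n, j ≠ Fin.castLE (le_trans (min_le_left p q) hpn) i →
      svalDesc M j ≠ σ)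
    (uM : (Fin p ⊕ Fin q) → ℝ) (vM : Fin n → ℝ)
    (huM : ∑ x, uM x ^ 2 = 1) (hvM : ∑ j, vM j ^ 2 = 1)
    (htriple1 : M.mulVec vM = σ • uM) (htriple2 : Mᵀ.mulVec uM = σ • vM) :
    ∃ (u1 : Fin p → ℝ) (u2 : Fin q → ℝ),
      (∑ a, u1 a ^ 2 = 1) ∧ (∑ b, u2 b ^ 2 = 1) ∧
      (V1ᵀ * V2).mulVec u2 = (σ ^ 2 - 1) • u1 ∧
      (V1ᵀ * V2)ᵀ.mulVec u1 = (σ ^ 2 - 1) • u2 ∧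
      σ ^ 2 - 1 = svalDesc (V1ᵀ * V2) (Fin.castLE (min_le_right p q) i) ∧
      uM = Sum.elim (fun a => u1 a / Real.sqrt 2) (fun b => u2 b / Real.sqrt 2) ∧
      vM = (1 / (Real.sqrt 2 * σ)) • (V1.mulVec u1 + V2.mulVec u2) :=
  stacked_singular_vectors_decompose_general n p q hpn V1 V2 h1 h2 M hM i σ hσ hσ1 uM vM huM
    htriple1 htriple2
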